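/- arXiv:2310.09906 — 2 statements merged into one kernel-verified Lean document; each statement's English description precedes it below -/
import Mathlib

section
/- Let 𝓛 : K[x,x⁻¹] → K be the linear functional defined by the combinatorial moments μ_n, and let (P_n) be the primitive sequence defined by the (ℓ+2)-term recurrence with P_n(x) = x^n for 0 ≤ n ≤ ℓ−1. Then for every n ≥ 0: 𝓛[P_n(x)·x^{−nℓ}] = (−1)^n·∏_{i=1}^n (a_{ℓ+1,i}/a_{ℓ,i}), and 𝓛[P_n(x)·x^ℓ] = a_{ℓ,0}·∏_{i=1}^n a_{ℓ+1,i}. In particular 𝓛[P_n(x)·x^{−nℓ}] ≠ 0. -/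
/-!
Write `S(h, x)` and `D(h, x)` for the weighted sums of `ℓ`-Schröder and dual `ℓ`-Schröder paths
from `(0, h)` to `(x, 0)`. Splitting off the first step gives linear recurrences for `S` and `D`,
and with them one checks that `F(n, k) = a_{ℓ,0} S(n, (k-1)ℓ + n) + (-1)^n D(n, -kℓ - n)`
satisfies the same `(ℓ+2)`-term recurrence in `n` as `𝓛[P_n x^{kℓ}]`: each of the two summands
violates it only at `n = ℓ, k = 0`, by `∓a_{ℓ,0}`, and the defects cancel. For `n < ℓ`, `F(n, k)`
is the moment `μ_{n+kℓ}`, hence `𝓛[P_n x^{kℓ}] = F(n, k)` for all `n` and `k`.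

Along a Schröder path `x + y` never decreases, along a dual one `x + (ℓ-1)y` never decreases, and
only the down steps keep them constant. So at `k = -n` the `S`-term vanishes and the `D`-term is
the single path of down steps, while at `k = 1` it is the other way round.
-/

open scoped BigOperators

section Paths

variable {σ : Type} {K : Type*}

/-- Final point of a path given by its initial point and list of steps. -/
def endPt (vec : σ → ℤ × ℤ) : ℤ × ℤ → List σ → ℤ × ℤ
  | p, [] => p
  | p, s :: rest => endPt vec (p + vec s) rest

/-- All vertices (starting points of steps together with the final point). -/
def verts (vec : σ → ℤ × ℤ) : ℤ × ℤ → List σ → List (ℤ × ℤ)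
  | p, [] => [p]
  | p, s :: rest => p :: verts vec (p + vec s) rest

/-- Weight of a path: product of the weights of its steps. -/
def pathWt [Field K] (vec : σ → ℤ × ℤ) (w : σ → ℤ × ℤ → K) :
    ℤ × ℤ → List σ → K
  | _, [] => 1
  | p, s :: rest => w s p * pathWt vec w (p + vec s) rest

/-- Every step of the path, placed at its starting point, satisfies `ok`. -/
def stepsOK (vec : σ → ℤ × ℤ) (ok : σ → ℤ × ℤ → Prop) :
    ℤ × ℤ → List σ → Prop
  | _, [] => True
  | p, s :: rest => ok s p ∧ stepsOK vec ok (p + vec s) rest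

end Paths

section Schroder

variable {K : Type*} [Field K]

/-- Steps of `ℓ`-Schröder paths: `a_i = (i, ℓ - i)` for `0 ≤ i ≤ ℓ` and
`a_{ℓ+1} = (1, -1)`. -/
def svec (ℓ : ℕ) (i : ℕ) : ℤ × ℤ :=
  if i ≤ ℓ then ((i : ℤ), (ℓ : ℤ) - i) else (1, -1)

/-- `ω` (a list of step indices `≤ ℓ+1`) is an `ℓ`-Schröder path from `p`:
it never goes below the `x`-axis. -/
def IsSchroder (ℓ : ℕ) (p : ℤ × ℤ) (ω : List ℕ) : Prop :=
  (∀ s ∈ ω, s ≤ ℓ + 1) ∧ ∀ q ∈ verts (svec ℓ) p ω, 0 ≤ q.2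

/-- Weight of an `ℓ`-Schröder step: `a_0` has weight `1`, and `a_i`
(`1 ≤ i ≤ ℓ+1`) starting at `y`-coordinate `t` has weight `a i t`. -/
def aWt (a : ℕ → ℕ → K) (s : ℕ) (q : ℤ × ℤ) : K :=
  if s = 0 then 1 else a s q.2.toNat

/-- `B n`: the set of `ℓ`-Schröder paths from `(0, n mod ℓ)` to `(n, 0)`. -/
def BSet (ℓ : ℕ) (n : ℤ) : Set (List ℕ) :=
  {ω | IsSchroder ℓ (0, n % (ℓ : ℤ)) ω ∧
    endPt (svec ℓ) (0, n % (ℓ : ℤ)) ω = (n, 0)}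

/-- `w(B n)`: generating function of `B n`. -/
noncomputable def wB (ℓ : ℕ) (a : ℕ → ℕ → K) (n : ℤ) : K :=
  ∑ᶠ ω ∈ BSet ℓ n, pathWt (svec ℓ) (aWt a) (0, n % (ℓ : ℤ)) ω

/-- Steps of dual `ℓ`-Schröder paths: `A_i = (ℓ-i, ℓ-i)` for `0 ≤ i ≤ ℓ-1`,
`A_ℓ = (ℓ, 0)` and `A_{ℓ+1} = (ℓ-1, -1)`. -/
def dvec (ℓ : ℕ) (i : ℕ) : ℤ × ℤ :=
  if i < ℓ then ((ℓ : ℤ) - i, (ℓ : ℤ) - i)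
  else if i = ℓ then ((ℓ : ℤ), 0) else ((ℓ : ℤ) - 1, -1)

/-- `ω` is a dual `ℓ`-Schröder path from `p`. -/
def IsDualSchroder (ℓ : ℕ) (p : ℤ × ℤ) (ω : List ℕ) : Prop :=
  (∀ s ∈ ω, s ≤ ℓ + 1) ∧ ∀ q ∈ verts (dvec ℓ) p ω, 0 ≤ q.2

/-- Weight of a dual `ℓ`-Schröder step starting at `y`-coordinate `t`:
`(-1)^{ℓ+1} / a ℓ t` for `A_0`, `(-1)^{ℓ+1+i} a i t / a ℓ t` for
`1 ≤ i ≤ ℓ-1` or `i = ℓ+1`, and `1 / a ℓ t` for `A_ℓ`. -/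
def dWt (ℓ : ℕ) (a : ℕ → ℕ → K) (s : ℕ) (q : ℤ × ℤ) : K :=
  if s = 0 then (-1 : K) ^ (ℓ + 1) / a ℓ q.2.toNat
  else if s = ℓ then 1 / a ℓ q.2.toNat
  else (-1 : K) ^ (ℓ + 1 + s) * a s q.2.toNat / a ℓ q.2.toNat

/-- `B̃ n`: the set of dual `ℓ`-Schröder paths from `(0, (-n) mod ℓ)`
to `(n, 0)`. -/
def DSet (ℓ : ℕ) (n : ℤ) : Set (List ℕ) :=
  {ω | IsDualSchroder ℓ (0, (-n) % (ℓ : ℤ)) ω ∧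
    endPt (dvec ℓ) (0, (-n) % (ℓ : ℤ)) ω = (n, 0)}

/-- `w(B̃ n)`: generating function of `B̃ n`. -/
noncomputable def wD (ℓ : ℕ) (a : ℕ → ℕ → K) (n : ℤ) : K :=
  ∑ᶠ ω ∈ DSet ℓ n, pathWt (dvec ℓ) (dWt ℓ a) (0, (-n) % (ℓ : ℤ)) ω

/-- The combinatorial moments: `μ n = a ℓ 0 · w(B_{n-ℓ})` for `n ≥ ℓ`,
`μ n = 0` for `1 ≤ n ≤ ℓ-1`, and `μ n = (-1)^{n mod ℓ} · w(B̃_{-n})`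
for `n ≤ 0`. -/
noncomputable def combMoment (ℓ : ℕ) (a : ℕ → ℕ → K) (n : ℤ) : K :=
  if (ℓ : ℤ) ≤ n then a ℓ 0 * wB ℓ a (n - ℓ)
  else if 1 ≤ n then 0
  else (-1 : K) ^ (n % (ℓ : ℤ)).toNat * wD ℓ a (-n)

end Schroder

/-- The `(ℓ+2)`-term recurrence with the convention `P_{-1} = 0`. -/
def SatisfiesRec {K : Type*} [Field K] (ℓ : ℕ) (a : ℕ → ℕ → K)
    (P : ℕ → Polynomial K) : Prop :=
  ∀ n : ℕ, ℓ ≤ n →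
    P n = -(∑ i ∈ Finset.Icc 1 (ℓ - 1), Polynomial.C (a i (n - ℓ)) * P (n - i))
      + (Polynomial.X ^ ℓ - Polynomial.C (a ℓ (n - ℓ))) * P (n - ℓ)
      - Polynomial.C (a (ℓ + 1) (n - ℓ)) * Polynomial.X ^ ℓ *
        (if n = ℓ then 0 else P (n - ℓ - 1))

open Finset

theorem neg_one_pow_tsub {R : Type*} [Monoid R] [HasDistribNeg R] {n i : ℕ} (hi : i ≤ n) :
    (-1 : R) ^ (n - i) = (-1) ^ (n + i) := by
  rw [show n + i = n - i + 2 * i by omega, pow_add, pow_mul]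
  simp

theorem sum_range_add_two_eq {M : Type*} [AddCommMonoid M] {ℓ : ℕ} (hℓ : 1 ≤ ℓ) (f : ℕ → M) :
    ∑ s ∈ range (ℓ + 2), f s = f 0 + ∑ i ∈ Icc 1 (ℓ - 1), f i + f ℓ + f (ℓ + 1) := by
  have hIco : Ico 1 ℓ = Icc 1 (ℓ - 1) := by
    ext i
    simp only [mem_Ico, mem_Icc]
    omega
  rw [sum_range_succ, sum_range_succ, range_eq_Ico, sum_eq_sum_Ico_succ_bot (by omega), hIco]

section LatticePaths

variable {K : Type*} [Field K] (vec : ℕ → ℤ × ℤ) (w : ℕ → ℤ × ℤ → K) (m : ℕ)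

def pathSet (p q : ℤ × ℤ) : Set (List ℕ) :=
  {ω | ((∀ s ∈ ω, s ≤ m) ∧ ∀ r ∈ verts vec p ω, 0 ≤ r.2) ∧ endPt vec p ω = q}

variable {vec m}

theorem nil_mem_pathSet {p q : ℤ × ℤ} : [] ∈ pathSet vec m p q ↔ 0 ≤ p.2 ∧ p = q := by
  simp only [pathSet, Set.mem_ofPred_eq, List.not_mem_nil, verts, List.mem_singleton, endPt]
  aesop

theorem cons_mem_pathSet {p q : ℤ × ℤ} {s : ℕ} {ω : List ℕ} :
    s :: ω ∈ pathSet vec m p q ↔ s ≤ m ∧ 0 ≤ p.2 ∧ ω ∈ pathSet vec m (p + vec s) q := by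
  simp only [pathSet, Set.mem_ofPred_eq, List.mem_cons, verts, endPt, forall_eq_or_imp]
  tauto

theorem pathSet_eq_empty_of_neg {p : ℤ × ℤ} (hp : p.2 < 0) (q : ℤ × ℤ) :
    pathSet vec m p q = ∅ := by
  refine Set.eq_empty_of_forall_notMem fun ω hω => ?_
  cases ω with
  | nil => exact hp.not_ge (nil_mem_pathSet.1 hω).1
  | cons s ω => exact hp.not_ge (cons_mem_pathSet.1 hω).2.1

theorem add_mul_length_le_of_mem_pathSet (ψ : ℤ × ℤ → ℤ) (c : ℤ)
    (hψ : ∀ s ≤ m, ∀ p, ψ p + c ≤ ψ (p + vec s)) {ω : List ℕ} :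
    ∀ {p q : ℤ × ℤ}, ω ∈ pathSet vec m p q → ψ p + c * ω.length ≤ ψ q := by
  induction ω with
  | nil => intro p q hω; obtain ⟨-, rfl⟩ := nil_mem_pathSet.1 hω; simp
  | cons s ω ih =>
    intro p q hω
    obtain ⟨hs, -, hω⟩ := cons_mem_pathSet.1 hω
    have := ih hω
    have := hψ s hs p
    push_cast [List.length_cons]
    linarith

theorem pathSet_finite (φ : ℤ × ℤ → ℤ) (hφ : ∀ s ≤ m, ∀ p, φ p + 1 ≤ φ (p + vec s))
    (p q : ℤ × ℤ) : (pathSet vec m p q).Finite := by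
  refine ((List.finite_length_le (Fin (m + 1)) (φ q - φ p).toNat).image
    (List.map Fin.val)).subset fun ω hω => ?_
  refine ⟨ω.pmap (fun s hs => (⟨s, Nat.lt_succ_of_le hs⟩ : Fin (m + 1))) hω.1.1, ?_, ?_⟩
  · have := add_mul_length_le_of_mem_pathSet φ 1 hφ hω
    simp only [Set.mem_ofPred_eq, List.length_pmap]
    omega
  · simp [List.map_pmap]

variable (vec m)

noncomputable def pathSum (p q : ℤ × ℤ) : K :=
  ∑ᶠ ω ∈ pathSet vec m p q, pathWt vec w p ω

variable {vec w m}

theorem pathSum_first_step {p q : ℤ × ℤ} (hp : 0 ≤ p.2) (hfin : (pathSet vec m p q).Finite) :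
    pathSum vec w m p q = (if p = q then 1 else 0) +
      ∑ s ∈ range (m + 1), w s p * pathSum vec w m (p + vec s) q := by
  set B := ⋃ s ∈ (range (m + 1) : Set ℕ), List.cons s '' pathSet vec m (p + vec s) q
  have hsplit : pathSet vec m p q = {ω | ω = [] ∧ p = q} ∪ B := by
    ext (_ | ⟨s, ω⟩)
    · simp [B, nil_mem_pathSet, hp]
    · simp [B, cons_mem_pathSet, hp, and_comm]
  have hB : B.Finite := hfin.subset (hsplit ▸ Set.subset_union_right)
  rw [pathSum, hsplit, finsum_mem_union, finsum_mem_biUnion, finsum_mem_coe_finset]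
  · congr 1
    · by_cases hpq : p = q <;> simp [hpq, pathWt]
    · refine sum_congr rfl fun s _ => ?_
      rw [finsum_mem_image List.cons_injective.injOn, pathSum, mul_finsum_mem]
      rfl
  · intro s _ t _ hst
    refine Set.disjoint_left.2 ?_
    rintro _ ⟨ω, -, rfl⟩ ⟨ω', -, h⟩
    exact hst (List.cons_eq_cons.1 h).1.symm
  · exact finite_toSet _
  · exact fun s hs => hB.subset (Set.subset_biUnion_of_mem (u := fun s =>
      List.cons s '' pathSet vec m (p + vec s) q) hs)
  · refine Set.disjoint_left.2 ?_
    rintro _ ⟨rfl, -⟩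
    simp [B]
  · exact (Set.finite_singleton []).subset fun ω h => h.1
  · exact hB

theorem endPt_add_left (v : ℤ × ℤ) (ω : List ℕ) :
    ∀ p, endPt vec (v + p) ω = v + endPt vec p ω := by
  induction ω with
  | nil => intro p; rfl
  | cons s ω ih => intro p; simp only [endPt, add_assoc, ih]

theorem verts_add_left (v : ℤ × ℤ) (ω : List ℕ) :
    ∀ p, verts vec (v + p) ω = (verts vec p ω).map (v + ·) := by
  induction ω with
  | nil => intro p; rfl
  | cons s ω ih => intro p; simp only [verts, add_assoc, ih, List.map_cons]

theorem pathWt_add_left {v : ℤ × ℤ} (hw : ∀ s q, w s (v + q) = w s q) (ω : List ℕ) :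
    ∀ p, pathWt vec w (v + p) ω = pathWt vec w p ω := by
  induction ω with
  | nil => intro p; rfl
  | cons s ω ih => intro p; simp only [pathWt, add_assoc, ih, hw]

theorem pathSet_add_left {v : ℤ × ℤ} (hv : v.2 = 0) (p q : ℤ × ℤ) :
    pathSet vec m (v + p) (v + q) = pathSet vec m p q := by
  ext ω
  simp only [pathSet, Set.mem_ofPred_eq, endPt_add_left, verts_add_left, List.forall_mem_map,
    Prod.snd_add, hv, zero_add, add_right_inj]

theorem pathSum_add_left {v : ℤ × ℤ} (hv : v.2 = 0) (hw : ∀ s q, w s (v + q) = w s q)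
    (p q : ℤ × ℤ) : pathSum vec w m (v + p) (v + q) = pathSum vec w m p q := by
  simp only [pathSum, pathSet_add_left hv, pathWt_add_left hw]

variable (vec w m)

noncomputable def heightSum (h x : ℤ) : K :=
  pathSum vec w m (0, h) (x, 0)

variable {vec w m}

theorem heightSum_of_neg {h : ℤ} (hh : h < 0) (x : ℤ) : heightSum vec w m h x = 0 := by
  simp [heightSum, pathSum, pathSet_eq_empty_of_neg (p := (0, h)) hh]

theorem heightSum_eq_zero_of_lt (ψ : ℤ × ℤ → ℤ) (hψ : ∀ s ≤ m, ∀ p, ψ p ≤ ψ (p + vec s))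
    {h x : ℤ} (hlt : ψ (x, 0) < ψ (0, h)) : heightSum vec w m h x = 0 := by
  have hempty : pathSet vec m (0, h) (x, 0) = ∅ :=
    Set.eq_empty_of_forall_notMem fun ω hω => hlt.not_ge <| by
      simpa using add_mul_length_le_of_mem_pathSet ψ 0 (by simpa using hψ) hω
  simp [heightSum, pathSum, hempty]

theorem heightSum_first_step (hw : ∀ s q, w s q = w s (0, q.2))
    (hfin : ∀ p q, (pathSet vec m p q).Finite) {h : ℤ} (hh : 0 ≤ h) (x : ℤ) :
    heightSum vec w m h x = (if h = 0 ∧ x = 0 then 1 else 0) +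
      ∑ s ∈ range (m + 1), w s (0, h) * heightSum vec w m (h + (vec s).2) (x - (vec s).1) := by
  rw [heightSum, pathSum_first_step hh (hfin _ _)]
  congr 1
  · simp [Prod.ext_iff, eq_comm, and_comm]
  · refine sum_congr rfl fun s _ => ?_
    have hv : (((vec s).1, 0) : ℤ × ℤ).2 = 0 := rfl
    rw [show ((0, h) + vec s : ℤ × ℤ) = ((vec s).1, 0) + (0, h + (vec s).2) by ext <;> simp,
      show ((x, 0) : ℤ × ℤ) = ((vec s).1, 0) + (x - (vec s).1, 0) by ext <;> simp,
      pathSum_add_left hv (fun t q => by rw [hw, hw t q]; simp), heightSum]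

end LatticePaths

section SchroderSums

variable {K : Type*} [Field K] {ℓ : ℕ} (a : ℕ → ℕ → K)

theorem schroder_pathSet_finite (hℓ : 1 ≤ ℓ) (p q : ℤ × ℤ) :
    (pathSet (svec ℓ) (ℓ + 1) p q).Finite :=
  pathSet_finite (fun p => (ℓ + 1) * p.1 + p.2)
    (fun s _ p => by simp only [svec]; split_ifs <;> simp <;> nlinarith) p q

variable (ℓ) in
noncomputable def schroderSum : ℤ → ℤ → K :=
  heightSum (svec ℓ) (aWt a) (ℓ + 1)

theorem wB_eq_schroderSum (n : ℤ) : wB ℓ a n = schroderSum ℓ a (n % ℓ) n := rfl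

theorem schroderSum_first_step (hℓ : 1 ≤ ℓ) (h : ℕ) (x : ℤ) :
    schroderSum ℓ a h x = (if h = 0 ∧ x = 0 then 1 else 0) + schroderSum ℓ a (h + ℓ) x
      + ∑ i ∈ Icc 1 (ℓ - 1), a i h * schroderSum ℓ a (h + ℓ - i) (x - i)
      + a ℓ h * schroderSum ℓ a h (x - ℓ) + a (ℓ + 1) h * schroderSum ℓ a (h - 1) (x - 1) := by
  rw [schroderSum, heightSum_first_step (fun _ _ => rfl) (schroder_pathSet_finite hℓ)
    (Nat.cast_nonneg h), sum_range_add_two_eq hℓ]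
  have hsum : ∀ i ∈ Icc 1 (ℓ - 1), aWt a i (0, h) *
      heightSum (svec ℓ) (aWt a) (ℓ + 1) (h + (svec ℓ i).2) (x - (svec ℓ i).1) =
      a i h * heightSum (svec ℓ) (aWt a) (ℓ + 1) (h + ℓ - i) (x - i) := by
    intro i hi
    rw [mem_Icc] at hi
    simp only [aWt, svec, if_pos (by omega : i ≤ ℓ), if_neg (by omega : i ≠ 0),
      Int.toNat_natCast, add_sub_assoc]
  have h0 : svec ℓ 0 = (0, (ℓ : ℤ)) := by simp [svec]
  have hl : svec ℓ ℓ = ((ℓ : ℤ), 0) := by simp [svec]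
  have hl1 : svec ℓ (ℓ + 1) = (1, -1) := by simp [svec]
  rw [sum_congr rfl hsum, h0, hl, hl1]
  simp only [aWt, if_pos, if_neg (by omega : ℓ ≠ 0), if_neg (Nat.succ_ne_zero ℓ),
    Int.toNat_natCast, Nat.cast_eq_zero, sub_zero, add_zero, ← sub_eq_add_neg]
  ring

theorem schroderSum_of_neg {h : ℤ} (hh : h < 0) (x : ℤ) : schroderSum ℓ a h x = 0 :=
  heightSum_of_neg hh x

theorem schroderSum_eq_zero_of_lt {h x : ℤ} (hx : x < h) : schroderSum ℓ a h x = 0 :=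
  heightSum_eq_zero_of_lt (fun p => p.1 + p.2)
    (fun s _ p => by simp only [svec]; split_ifs <;> simp <;> omega) (by simpa using hx)

theorem schroderSum_diag (hℓ : 1 ≤ ℓ) (h : ℕ) :
    schroderSum ℓ a h h = ∏ t ∈ Icc 1 h, a (ℓ + 1) t := by
  have hstep : ∀ n : ℕ, schroderSum ℓ a n n =
      (if n = 0 then 1 else 0) + a (ℓ + 1) n * schroderSum ℓ a (n - 1) (n - 1) := by
    intro n
    rw [schroderSum_first_step a hℓ, schroderSum_eq_zero_of_lt a (by omega),
      sum_eq_zero fun i hi => by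
        rw [schroderSum_eq_zero_of_lt a (by simp only [mem_Icc] at hi; omega), mul_zero],
      schroderSum_eq_zero_of_lt a (by omega)]
    simp
  induction h with
  | zero => simpa [schroderSum_of_neg] using hstep 0
  | succ h ih =>
    rw [hstep, prod_Icc_succ_top (by omega), ← ih]
    push_cast
    simp [mul_comm]

end SchroderSums

section DualSums

variable {K : Type*} [Field K] {ℓ : ℕ} (a : ℕ → ℕ → K)

theorem dual_pathSet_finite (hℓ : 1 ≤ ℓ) (p q : ℤ × ℤ) :
    (pathSet (dvec ℓ) (ℓ + 1) p q).Finite :=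
  pathSet_finite (fun p => 2 * p.1 - p.2)
    (fun s _ p => by simp only [dvec]; split_ifs <;> simp <;> omega) p q

variable (ℓ) in
noncomputable def dualSum : ℤ → ℤ → K :=
  heightSum (dvec ℓ) (dWt ℓ a) (ℓ + 1)

theorem wD_eq_dualSum (n : ℤ) : wD ℓ a n = dualSum ℓ a ((-n) % ℓ) n := rfl

theorem dualSum_of_neg {h : ℤ} (hh : h < 0) (x : ℤ) : dualSum ℓ a h x = 0 :=
  heightSum_of_neg hh x

theorem dualSum_eq_zero_of_lt {h x : ℤ} (hx : x < (ℓ - 1) * h) : dualSum ℓ a h x = 0 :=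
  heightSum_eq_zero_of_lt (fun p => p.1 + (ℓ - 1) * p.2)
    (fun s _ p => by simp only [dvec]; split_ifs <;> simp <;> nlinarith) (by simpa using hx)

theorem mul_dualSum_first_step (hℓ : 1 ≤ ℓ) {h : ℕ} (ha : a ℓ h ≠ 0) (x : ℤ) :
    a ℓ h * dualSum ℓ a h x = a ℓ h * (if h = 0 ∧ x = 0 then 1 else 0)
      + (-1) ^ (ℓ + 1) * dualSum ℓ a (h + ℓ) (x - ℓ)
      + ∑ i ∈ Icc 1 (ℓ - 1), (-1) ^ (ℓ + 1 + i) * a i h * dualSum ℓ a (h + ℓ - i) (x - (ℓ - i))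
      + dualSum ℓ a h (x - ℓ) + a (ℓ + 1) h * dualSum ℓ a (h - 1) (x - (ℓ - 1)) := by
  have hwt : ∀ s, a ℓ h * dWt ℓ a s (0, h) =
      if s = 0 then (-1) ^ (ℓ + 1) else if s = ℓ then 1 else (-1) ^ (ℓ + 1 + s) * a s h := by
    intro s
    simp only [dWt, Int.toNat_natCast]
    split_ifs <;> field_simp
  have hsum : ∀ i ∈ Icc 1 (ℓ - 1), a ℓ h * (dWt ℓ a i (0, h) *
      heightSum (dvec ℓ) (dWt ℓ a) (ℓ + 1) (h + (dvec ℓ i).2) (x - (dvec ℓ i).1)) =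
      (-1) ^ (ℓ + 1 + i) * a i h *
        heightSum (dvec ℓ) (dWt ℓ a) (ℓ + 1) (h + ℓ - i) (x - (ℓ - i)) := by
    intro i hi
    rw [mem_Icc] at hi
    rw [← mul_assoc, hwt, if_neg (by omega), if_neg (by omega)]
    simp only [dvec, if_pos (by omega : i < ℓ), add_sub_assoc]
  have h0 : dvec ℓ 0 = ((ℓ : ℤ), (ℓ : ℤ)) := by simp [dvec, (by omega : 0 < ℓ)]
  have hl : dvec ℓ ℓ = ((ℓ : ℤ), 0) := by simp [dvec]
  have hl1 : dvec ℓ (ℓ + 1) = ((ℓ : ℤ) - 1, -1) := by simp [dvec]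
  have hsign : (-1 : K) ^ (ℓ + 1 + (ℓ + 1)) = 1 := Even.neg_one_pow ⟨ℓ + 1, rfl⟩
  rw [dualSum, heightSum_first_step (fun _ _ => rfl) (dual_pathSet_finite hℓ)
    (Nat.cast_nonneg h), sum_range_add_two_eq hℓ, mul_add, mul_add, mul_add, mul_add, mul_sum,
    sum_congr rfl hsum, ← mul_assoc, ← mul_assoc, ← mul_assoc, hwt, hwt, hwt, h0, hl, hl1]
  simp only [if_pos, if_neg (by omega : ℓ ≠ 0), if_neg (Nat.succ_ne_zero ℓ),
    if_neg (by omega : ℓ + 1 ≠ ℓ), hsign, Nat.cast_eq_zero, add_zero, one_mul,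
    ← sub_eq_add_neg]
  ring

theorem dualSum_diag (hℓ : 1 ≤ ℓ) (ha : ∀ j, a ℓ j ≠ 0) (h : ℕ) :
    dualSum ℓ a h ((ℓ - 1) * h) = ∏ t ∈ Icc 1 h, a (ℓ + 1) t / a ℓ t := by
  have hstep : ∀ n : ℕ, a ℓ n * dualSum ℓ a n ((ℓ - 1) * n) = a ℓ n * (if n = 0 then 1 else 0)
      + a (ℓ + 1) n * dualSum ℓ a (n - 1) ((ℓ - 1) * (n - 1)) := by
    intro n
    rw [mul_dualSum_first_step a hℓ (ha n), dualSum_eq_zero_of_lt a (by nlinarith),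
      sum_eq_zero fun i hi => by
        have hiℓ : (i : ℤ) < ℓ := by simp only [mem_Icc] at hi; omega
        rw [dualSum_eq_zero_of_lt a (by nlinarith), mul_zero],
      dualSum_eq_zero_of_lt a (by nlinarith),
      show (ℓ - 1 : ℤ) * n - (ℓ - 1) = (ℓ - 1) * (n - 1) by ring]
    by_cases hn : n = 0 <;> simp [hn]
  induction h with
  | zero => simpa [dualSum_of_neg, ha 0] using hstep 0
  | succ h ih =>
    have := hstep (h + 1)
    push_cast at this ⊢
    rw [add_sub_cancel_right, ih] at this
    rw [prod_Icc_succ_top (by omega), ← mul_div_assoc, eq_div_iff (ha _)]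
    linear_combination this

end DualSums

section Recurrence

variable {K : Type*} [Field K] (ℓ : ℕ) (a : ℕ → ℕ → K)

/-- `F n k` stands for `𝓛[P_n x^{kℓ}]`: the recurrence for `P_{h+ℓ}`, multiplied by `x^{kℓ}`
and fed to `𝓛`, says that `recResidual ℓ a F h k = 0`. -/
def recResidual (F : ℕ → ℤ → K) (h : ℕ) (k : ℤ) : K :=
  F (h + ℓ) k + ∑ i ∈ Icc 1 (ℓ - 1), a i h * F (h + ℓ - i) k - F h (k + 1) + a ℓ h * F h k
    + if h = 0 then 0 else a (ℓ + 1) h * F (h - 1) (k + 1)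

theorem recResidual_mul_add (c : K) (F G : ℕ → ℤ → K) (h : ℕ) (k : ℤ) :
    recResidual ℓ a (fun n k => c * F n k + G n k) h k =
      c * recResidual ℓ a F h k + recResidual ℓ a G h k := by
  simp only [recResidual, mul_add, sum_add_distrib, mul_left_comm _ c, ← mul_sum]
  split_ifs <;> ring

variable {ℓ a} in
theorem eq_of_recResidual_eq (hℓ : 1 ≤ ℓ) {F G : ℕ → ℤ → K}
    (hres : ∀ h k, recResidual ℓ a F h k = recResidual ℓ a G h k)
    (hinit : ∀ n < ℓ, ∀ k, F n k = G n k) (n : ℕ) (k : ℤ) : F n k = G n k := by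
  induction n using Nat.strong_induction_on generalizing k with
  | _ n ih =>
  obtain hn | hn := lt_or_ge n ℓ
  · exact hinit n hn k
  obtain ⟨h, rfl⟩ : ∃ h, n = h + ℓ := ⟨n - ℓ, by omega⟩
  have hsum : ∑ i ∈ Icc 1 (ℓ - 1), a i h * F (h + ℓ - i) k =
      ∑ i ∈ Icc 1 (ℓ - 1), a i h * G (h + ℓ - i) k :=
    sum_congr rfl fun i hi => by rw [ih _ (by simp only [mem_Icc] at hi; omega)]
  have hlast : (if h = 0 then 0 else a (ℓ + 1) h * F (h - 1) (k + 1)) =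
      if h = 0 then 0 else a (ℓ + 1) h * G (h - 1) (k + 1) := by
    split_ifs with hh
    · rfl
    · rw [ih _ (by omega)]
  have := hres h k
  simp only [recResidual, hsum, hlast, ih h (by omega)] at this
  linear_combination this

end Recurrence

section PathFormula

variable {K : Type*} [Field K] {ℓ : ℕ} (a : ℕ → ℕ → K)

variable (ℓ) in
noncomputable def pathFormula (n : ℕ) (k : ℤ) : K :=
  a ℓ 0 * schroderSum ℓ a n ((k - 1) * ℓ + n) + (-1) ^ n * dualSum ℓ a n (-(k * ℓ) - n)

theorem recResidual_schroderSum (hℓ : 1 ≤ ℓ) (h : ℕ) (k : ℤ) :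
    recResidual ℓ a (fun n k => schroderSum ℓ a n ((k - 1) * ℓ + n)) h k =
      -(if h = 0 ∧ k = 0 then 1 else 0) := by
  have hrec := schroderSum_first_step a hℓ h (k * ℓ + h)
  have hδ : (if h = 0 ∧ k * ℓ + h = 0 then (1 : K) else 0) =
      if h = 0 ∧ k = 0 then 1 else 0 := by
    have hℓ0 : ℓ ≠ 0 := by omega
    obtain rfl | hh := eq_or_ne h 0
    · simp [hℓ0]
    · simp [hh]
  have hsum : ∑ i ∈ Icc 1 (ℓ - 1),
        a i h * schroderSum ℓ a (h + ℓ - i : ℕ) ((k - 1) * ℓ + (h + ℓ - i : ℕ)) =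
      ∑ i ∈ Icc 1 (ℓ - 1), a i h * schroderSum ℓ a (h + ℓ - i) (k * ℓ + h - i) :=
    sum_congr rfl fun i hi => by
      simp only [mem_Icc] at hi
      push_cast [(by omega : i ≤ h + ℓ)]
      congr 2
      ring
  rw [hδ] at hrec
  simp only [recResidual, hsum]
  rw [show (k - 1) * ℓ + ((h + ℓ : ℕ) : ℤ) = k * ℓ + h by push_cast; ring, Nat.cast_add,
    show (k + 1 - 1) * ℓ + (h : ℤ) = k * ℓ + h by ring,
    show (k - 1) * ℓ + (h : ℤ) = k * ℓ + h - ℓ by ring]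
  obtain rfl | hh := eq_or_ne h 0
  · rw [if_pos rfl]
    rw [schroderSum_of_neg a (show ((0 : ℕ) : ℤ) - 1 < 0 by simp)] at hrec
    linear_combination -hrec
  · rw [if_neg hh, Nat.cast_pred (Nat.pos_of_ne_zero hh),
      show (k + 1 - 1) * ℓ + ((h : ℤ) - 1) = k * ℓ + h - 1 by ring]
    linear_combination -hrec

theorem recResidual_dualSum (hℓ : 1 ≤ ℓ) {h : ℕ} (ha : a ℓ h ≠ 0) (k : ℤ) :
    recResidual ℓ a (fun n k => (-1) ^ n * dualSum ℓ a n (-(k * ℓ) - n)) h k =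
      if h = 0 ∧ k = 0 then a ℓ 0 else 0 := by
  have hrec := mul_dualSum_first_step a hℓ ha (-(k * ℓ) - h)
  have hδ : a ℓ h * (if h = 0 ∧ -(k * ℓ) - h = 0 then 1 else 0) =
      if h = 0 ∧ k = 0 then a ℓ 0 else 0 := by
    have hℓ0 : ℓ ≠ 0 := by omega
    obtain rfl | hh := eq_or_ne h 0
    · simp [hℓ0]
    · simp [hh]
  have hsum : ∑ i ∈ Icc 1 (ℓ - 1), a i h *
        ((-1) ^ (h + ℓ - i) * dualSum ℓ a (h + ℓ - i : ℕ) (-(k * ℓ) - (h + ℓ - i : ℕ))) =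
      -((-1) ^ h * ∑ i ∈ Icc 1 (ℓ - 1),
        (-1) ^ (ℓ + 1 + i) * a i h * dualSum ℓ a (h + ℓ - i) (-(k * ℓ) - h - (ℓ - i))) := by
    rw [mul_sum, ← sum_neg_distrib]
    refine sum_congr rfl fun i hi => ?_
    simp only [mem_Icc] at hi
    rw [neg_one_pow_tsub (by omega : i ≤ h + ℓ), Nat.cast_sub (by omega : i ≤ h + ℓ),
      Nat.cast_add, show -(k * ℓ) - ((h : ℤ) + ℓ - i) = -(k * ℓ) - h - (ℓ - i) by ring]
    ring
  rw [hδ] at hrec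
  simp only [recResidual, hsum]
  rw [Nat.cast_add, show -(k * ℓ) - ((h : ℤ) + ℓ) = -(k * ℓ) - h - ℓ by ring,
    show -((k + 1) * ℓ) - (h : ℤ) = -(k * ℓ) - h - ℓ by ring]
  obtain rfl | hh := eq_or_ne h 0
  · rw [if_pos rfl]
    rw [dualSum_of_neg a (show ((0 : ℕ) : ℤ) - 1 < 0 by simp)] at hrec
    linear_combination hrec
  · rw [if_neg fun h' => hh h'.1] at hrec
    rw [if_neg hh, if_neg fun h' => hh h'.1]
    obtain ⟨j, rfl⟩ := Nat.exists_eq_add_one_of_ne_zero hh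
    rw [Nat.add_sub_cancel, show -((k + 1) * ℓ) - (j : ℤ) =
      -(k * ℓ) - ((j + 1 : ℕ) : ℤ) - (ℓ - 1) by push_cast; ring,
      show ((j : ℕ) : ℤ) = ((j + 1 : ℕ) : ℤ) - 1 by push_cast; ring]
    linear_combination (-1) ^ (j + 1) * hrec

theorem recResidual_pathFormula (hℓ : 1 ≤ ℓ) (ha : ∀ j, a ℓ j ≠ 0) (h : ℕ) (k : ℤ) :
    recResidual ℓ a (pathFormula ℓ a) h k = 0 := by
  change recResidual ℓ a (fun n k => a ℓ 0 * schroderSum ℓ a n ((k - 1) * ℓ + n) +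
    (-1) ^ n * dualSum ℓ a n (-(k * ℓ) - n)) h k = 0
  rw [recResidual_mul_add, recResidual_schroderSum a hℓ, recResidual_dualSum a hℓ (ha h)]
  split_ifs <;> ring

theorem pathFormula_of_lt (hℓ : 1 ≤ ℓ) {n : ℕ} (hn : n < ℓ) (k : ℤ) :
    pathFormula ℓ a n k = combMoment ℓ a (n + k * ℓ) := by
  have hmod : ∀ j : ℤ, (j * ℓ + n) % ℓ = n := fun j => by
    rw [add_comm, Int.add_mul_emod_self_right, Int.emod_eq_of_lt (by omega) (by omega)]
  have hℓ' : (1 : ℤ) ≤ ℓ := by exact_mod_cast hℓ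
  rw [pathFormula, combMoment]
  split_ifs with h₁ h₂
  · have hk : 1 ≤ k := by by_contra; nlinarith
    rw [wB_eq_schroderSum, show (n : ℤ) + k * ℓ - ℓ = (k - 1) * ℓ + n by ring, hmod,
      dualSum_eq_zero_of_lt a (by nlinarith)]
    ring
  · obtain rfl : k = 0 := by
      have : 0 ≤ k := by by_contra; nlinarith
      have : k ≤ 0 := by by_contra; nlinarith
      omega
    rw [schroderSum_eq_zero_of_lt a (by omega), dualSum_eq_zero_of_lt a (by nlinarith)]
    ring
  · have hk : k ≤ 0 := by by_contra; nlinarith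
    rw [wD_eq_dualSum, neg_neg, show (n : ℤ) + k * ℓ = k * ℓ + n by ring, hmod,
      Int.toNat_natCast, schroderSum_eq_zero_of_lt a (by nlinarith),
      show -(k * ℓ + n) = -(k * ℓ) - n by ring]
    ring

theorem pathFormula_neg_self (hℓ : 1 ≤ ℓ) (ha : ∀ j, a ℓ j ≠ 0) (n : ℕ) :
    pathFormula ℓ a n (-n) = (-1) ^ n * ∏ i ∈ Icc 1 n, a (ℓ + 1) i / a ℓ i := by
  rw [pathFormula, schroderSum_eq_zero_of_lt a (by nlinarith),
    show -(-(n : ℤ) * ℓ) - n = (ℓ - 1) * n by ring, dualSum_diag a hℓ ha]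
  ring

theorem pathFormula_one (hℓ : 1 ≤ ℓ) (n : ℕ) :
    pathFormula ℓ a n 1 = a ℓ 0 * ∏ i ∈ Icc 1 n, a (ℓ + 1) i := by
  rw [pathFormula, sub_self, zero_mul, zero_add, schroderSum_diag a hℓ,
    dualSum_eq_zero_of_lt a (by nlinarith)]
  ring

end PathFormula

section Functional

open Polynomial
open LaurentPolynomial (T T_add)
open scoped LaurentPolynomial

variable {K : Type*} [Field K] (L : K[T;T⁻¹] →ₗ[K] K)

noncomputable def shiftedForm (m : ℤ) : K[X] →ₗ[K] K :=
  L ∘ₗ LinearMap.mulRight K (T m) ∘ₗ toLaurentAlg.toLinearMap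

theorem shiftedForm_apply (m : ℤ) (p : K[X]) :
    shiftedForm L m p = L (toLaurent p * T m) := rfl

theorem shiftedForm_X_pow_mul (m : ℤ) (j : ℕ) (p : K[X]) :
    shiftedForm L m (X ^ j * p) = shiftedForm L (m + j) p := by
  simp only [shiftedForm_apply, map_mul, toLaurent_X_pow, T_add]
  congr 1
  ring

theorem shiftedForm_C_mul (m : ℤ) (c : K) (p : K[X]) :
    shiftedForm L m (C c * p) = c * shiftedForm L m p := by
  rw [C_mul', map_smul, smul_eq_mul]

theorem recResidual_shiftedForm {ℓ : ℕ} (a : ℕ → ℕ → K) {P : ℕ → K[X]}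
    (hrec : SatisfiesRec ℓ a P) (h : ℕ) (k : ℤ) :
    recResidual ℓ a (fun n k => shiftedForm L (k * ℓ) (P n)) h k = 0 := by
  have hP := hrec (h + ℓ) (by omega)
  simp only [Nat.add_sub_cancel, add_eq_right] at hP
  simp only [recResidual, hP]
  split_ifs <;> simp only [mul_zero, sub_zero, sub_mul, mul_assoc, map_add, map_sub, map_neg,
    map_sum, shiftedForm_C_mul, shiftedForm_X_pow_mul, add_one_mul] <;> ring

theorem shiftedForm_eq_pathFormula {ℓ : ℕ} (hℓ : 1 ≤ ℓ) {a : ℕ → ℕ → K}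
    (ha : ∀ j, a ℓ j ≠ 0) {P : ℕ → K[X]} (hinit : ∀ n < ℓ, P n = X ^ n)
    (hrec : SatisfiesRec ℓ a P) (hL : ∀ n, L (T n) = combMoment ℓ a n) (n : ℕ) (k : ℤ) :
    shiftedForm L (k * ℓ) (P n) = pathFormula ℓ a n k := by
  refine eq_of_recResidual_eq (a := a) hℓ (F := fun n k => shiftedForm L (k * ℓ) (P n))
    (G := pathFormula ℓ a) (fun h k => ?_) (fun n hn k => ?_) n k
  · rw [recResidual_shiftedForm L a hrec, recResidual_pathFormula a hℓ ha]
  · rw [pathFormula_of_lt a hℓ hn, hinit n hn, shiftedForm_apply, toLaurent_X_pow,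
      ← T_add, hL]

end Functional

/-- For the functional `L` given by the combinatorial moments and the
primitive `ℓ`-LBPs `P`: `L (P n · x^{-nℓ}) = (-1)^n ∏_{i=1}^n a_{ℓ+1,i}/a_{ℓ,i}`
and `L (P n · x^ℓ) = a ℓ 0 · ∏_{i=1}^n a_{ℓ+1,i}`; in particular
`L (P n · x^{-nℓ}) ≠ 0`. -/
theorem diagonal_values_of_functional {K : Type*} [Field K]
    (ℓ : ℕ) (hℓ : 1 ≤ ℓ) (a : ℕ → ℕ → K)
    (haℓ : ∀ j : ℕ, a ℓ j ≠ 0) (haℓ1 : ∀ j : ℕ, a (ℓ + 1) j ≠ 0)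
    (P : ℕ → Polynomial K)
    (hinit : ∀ n : ℕ, n < ℓ → P n = Polynomial.X ^ n)
    (hrec : SatisfiesRec ℓ a P)
    (L : LaurentPolynomial K →ₗ[K] K)
    (hL : ∀ n : ℤ, L (LaurentPolynomial.T n) = combMoment ℓ a n) :
    ∀ n : ℕ,
      L (Polynomial.toLaurent (P n) * LaurentPolynomial.T (-(n : ℤ) * ℓ)) =
        (-1 : K) ^ n * ∏ i ∈ Finset.Icc 1 n, a (ℓ + 1) i / a ℓ i ∧
      L (Polynomial.toLaurent (P n) * LaurentPolynomial.T (ℓ : ℤ)) =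
        a ℓ 0 * ∏ i ∈ Finset.Icc 1 n, a (ℓ + 1) i ∧
      L (Polynomial.toLaurent (P n) * LaurentPolynomial.T (-(n : ℤ) * ℓ)) ≠ 0 := by
  intro n
  have hmoment := shiftedForm_eq_pathFormula L hℓ haℓ hinit hrec hL n
  have hdiag : L (Polynomial.toLaurent (P n) * LaurentPolynomial.T (-(n : ℤ) * ℓ)) =
      (-1 : K) ^ n * ∏ i ∈ Icc 1 n, a (ℓ + 1) i / a ℓ i := by
    rw [← shiftedForm_apply, hmoment, pathFormula_neg_self a hℓ haℓ]
  refine ⟨hdiag, ?_, ?_⟩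
  · rw [← one_mul (ℓ : ℤ), ← shiftedForm_apply, hmoment, pathFormula_one a hℓ]
  · rw [hdiag]
    exact mul_ne_zero (pow_ne_zero _ (neg_ne_zero.2 one_ne_zero))
      (prod_ne_zero_iff.2 fun i _ => div_ne_zero (haℓ1 i) (haℓ i))
end

section
/- For all integers s ≤ t and every integer r with 0 ≤ r < ℓ, the cardinalities satisfy |B^r_{s,t+1}| = (ℓ+1) · ∑_{i=0}^{r} |S^{i+ℓ}_{s,t}|. -/
open scoped BigOperators

/-- `ω` is a small `ℓ`-Schröder path from `p`: in addition, no step `a_i`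
with `1 ≤ i ≤ ℓ` starts at a point of `y`-coordinate `≤ i - 1`. -/
def IsSmall (ℓ : ℕ) (p : ℤ × ℤ) (ω : List ℕ) : Prop :=
  IsSchroder ℓ p ω ∧
  stepsOK (svec ℓ) (fun i q => 1 ≤ i → i ≤ ℓ → (i : ℤ) ≤ q.2) p ω

/-- The weight `v` of a step `a_i` (`0 ≤ i ≤ ℓ`) starting at `(x,y)` is
`b i ((x+y)/ℓ)`, and of a step `a_{ℓ+1}` it is `c ((x+y)/ℓ)`. -/
def vWt {K : Type*} (ℓ : ℕ) (b : ℕ → ℤ → K) (c : ℤ → K) (s : ℕ) (q : ℤ × ℤ) : K :=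
  if s ≤ ℓ then b s ((q.1 + q.2) / ℓ) else c ((q.1 + q.2) / ℓ)

/-- `B^r_{s,t}`: the set of (big) `ℓ`-Schröder paths from `(sℓ - r, r)`
to `(tℓ, 0)`. -/
def BigSet (ℓ : ℕ) (s t : ℤ) (r : ℕ) : Set (List ℕ) :=
  {ω | IsSchroder ℓ (s * ℓ - r, (r : ℤ)) ω ∧
    endPt (svec ℓ) (s * ℓ - r, (r : ℤ)) ω = (t * ℓ, 0)}

/-- `S^r_{s,t}`: the set of small `ℓ`-Schröder paths from `(sℓ - r, r)`
to `(tℓ, 0)`. -/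
def SmallSet (ℓ : ℕ) (s t : ℤ) (r : ℕ) : Set (List ℕ) :=
  {ω | IsSmall ℓ (s * ℓ - r, (r : ℤ)) ω ∧
    endPt (svec ℓ) (s * ℓ - r, (r : ℤ)) ω = (t * ℓ, 0)}

/-- `M^r_{s,t}`: marked `ℓ`-Schröder paths, i.e. pairs `(ω, m)` with
`ω ∈ B^r_{s,t}` having a step starting or ending at `(tℓ - m, m)`;
by convention `M^0_{t,t} = {(ε, 0)}`. -/
def MarkedSet (ℓ : ℕ) (s t : ℤ) (r : ℕ) : Set (List ℕ × ℕ) :=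
  if s = t ∧ r = 0 then {([], 0)}
  else {p | p.1 ∈ BigSet ℓ s t r ∧ p.1 ≠ [] ∧
    (t * ℓ - p.2, (p.2 : ℤ)) ∈ verts (svec ℓ) (s * ℓ - r, (r : ℤ)) p.1}

/-- `v(B^r_{s,t})`: generating function of `B^r_{s,t}`. -/
noncomputable def vB {K : Type*} [Field K] (ℓ : ℕ) (b : ℕ → ℤ → K) (c : ℤ → K)
    (s t : ℤ) (r : ℕ) : K :=
  ∑ᶠ ω ∈ BigSet ℓ s t r, pathWt (svec ℓ) (vWt ℓ b c) (s * ℓ - r, (r : ℤ)) ω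

/-- `v(S^r_{s,t})`: generating function of `S^r_{s,t}`. -/
noncomputable def vS {K : Type*} [Field K] (ℓ : ℕ) (b : ℕ → ℤ → K) (c : ℤ → K)
    (s t : ℤ) (r : ℕ) : K :=
  ∑ᶠ ω ∈ SmallSet ℓ s t r, pathWt (svec ℓ) (vWt ℓ b c) (s * ℓ - r, (r : ℤ)) ω

/-- `v(M^r_{s,t})`: generating function of `M^r_{s,t}`, a pair `(ω, m)`
having weight `v(ω) · c_{t+1}^m / c_t^m`. -/
noncomputable def vM {K : Type*} [Field K] (ℓ : ℕ) (b : ℕ → ℤ → K) (c : ℤ → K)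
    (s t : ℤ) (r : ℕ) : K :=
  ∑ᶠ p ∈ MarkedSet ℓ s t r,
    pathWt (svec ℓ) (vWt ℓ b c) (s * ℓ - r, (r : ℤ)) p.1 *
      c (t + 1) ^ p.2 / c t ^ p.2

/-! Sort paths by their first step. From height `r` on level `s` (start point `(sℓ - r, r)`),
a step `a_j` with `j ≤ ℓ` leads to height `r + ℓ - j` on level `s + 1`, and `a_{ℓ+1}` to height
`r - 1` on level `s`; a small path may take `a_j`, `j ≥ 1`, only when `j ≤ r`. This gives
recurrences for `|B^r_{s,t}|` and `|S^r_{s,t}|`, from which downward induction on `s` shows that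
every window sum `|B^{r-ℓ}_{s,t}| + ⋯ + |B^r_{s,t}|` (heights below `0` omitted) equals
`(ℓ+1)|S^r_{s,t}|`, provided `s < t` or `r ≥ ℓ`; on level `t` all these sets are singletons.
Unrolling the recurrence for `B^r_{s,t+1}` in `r` writes it as the sum over `i ≤ r` of the windows
ending at `i + ℓ` on level `s + 1`, and `S_{s+1,t+1} = S_{s,t}` by horizontal translation. -/

open Finset

theorem Finset.sum_range_sub_eq_sum_Icc {M : Type*} [AddCommMonoid M] (f : ℕ → M) (r ℓ : ℕ) :
    ∑ j ∈ range (ℓ + 1), f (r + ℓ - j) = ∑ h ∈ Icc r (r + ℓ), f h :=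
  sum_nbij' (fun j => r + ℓ - j) (fun h => r + ℓ - h)
    (by intro j; simp; omega) (by intro h; simp; omega)
    (by intro j; simp; omega) (by intro h; simp; omega) (fun _ _ => rfl)

theorem Finset.sum_range_ite_le_eq_sum_Icc {M : Type*} [AddCommMonoid M] (f : ℕ → M) (r ℓ : ℕ) :
    ∑ j ∈ range (ℓ + 1), (if j ≤ r then f (r - j) else 0) = ∑ h ∈ Icc (r - ℓ) r, f h := by
  rw [← sum_filter]
  exact sum_nbij' (fun j => r - j) (fun h => r - h)
    (by intro j; simp; omega) (by intro h; simp; omega)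
    (by intro j; simp; omega) (by intro h; simp; omega) (fun _ _ => rfl)

theorem Finset.sum_Icc_ite_pred {M : Type*} [AddCommMonoid M] (f : ℕ → M) (a b : ℕ) :
    ∑ h ∈ Icc a (b + 1), (if h = 0 then 0 else f (h - 1)) = ∑ h ∈ Icc (a - 1) b, f h := by
  rw [sum_ite, sum_const_zero, zero_add]
  exact sum_nbij' (· - 1) (· + 1)
    (by intro j; simp; omega) (by intro h; simp)
    (by intro j; simp; omega) (by intro h; simp) (fun _ _ => rfl)

namespace List

variable {α : Type*}

theorem biUnion_image_cons_preimage {X : Set (List α)} {A : Finset α} (hnil : [] ∉ X)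
    (hhead : ∀ a ω, a :: ω ∈ X → a ∈ A) :
    ⋃ a ∈ A, List.cons a '' (List.cons a ⁻¹' X) = X := by
  ext (_ | ⟨a, ω⟩)
  · simpa using hnil
  · simp only [Set.mem_iUnion, Set.mem_image, Set.mem_preimage, cons.injEq, exists_prop]
    exact ⟨fun ⟨_, _, _, h, rfl, rfl⟩ => h, fun h => ⟨a, hhead a ω h, ω, h, rfl, rfl⟩⟩

theorem finite_of_finite_preimage_cons {X : Set (List α)} (A : Finset α) (hnil : [] ∉ X)
    (hhead : ∀ a ω, a :: ω ∈ X → a ∈ A) (hfin : ∀ a ∈ A, (List.cons a ⁻¹' X).Finite) :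
    X.Finite := by
  rw [← biUnion_image_cons_preimage hnil hhead]
  exact A.finite_toSet.biUnion fun a ha => (hfin a ha).image _

theorem ncard_eq_sum_ncard_preimage_cons {X : Set (List α)} (A : Finset α) (hnil : [] ∉ X)
    (hhead : ∀ a ω, a :: ω ∈ X → a ∈ A) (hfin : ∀ a ∈ A, (List.cons a ⁻¹' X).Finite) :
    X.ncard = ∑ a ∈ A, (List.cons a ⁻¹' X).ncard := by
  have hdisj : (A : Set α).PairwiseDisjoint fun a => List.cons a '' (List.cons a ⁻¹' X) := by
    intro a _ b _ hab
    refine Set.disjoint_left.2 ?_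
    rintro _ ⟨ω, -, rfl⟩ ⟨ω', -, h⟩
    exact hab (List.cons.inj h).1.symm
  calc X.ncard = (⋃ a ∈ (A : Set α), List.cons a '' (List.cons a ⁻¹' X)).ncard := by
        rw [Finset.set_biUnion_coe, biUnion_image_cons_preimage hnil hhead]
    _ = ∑ a ∈ A, (List.cons a ⁻¹' X).ncard := by
        rw [A.finite_toSet.ncard_biUnion (fun a ha => (hfin a ha).image _) hdisj,
          finsum_mem_coe_finset]
        exact sum_congr rfl fun a _ => Set.ncard_image_of_injective _ List.cons_injective

end List

section Paths

theorem endPt_add {σ : Type} (vec : σ → ℤ × ℤ) (p v : ℤ × ℤ) (ω : List σ) :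
    endPt vec (p + v) ω = endPt vec p ω + v := by
  induction ω generalizing p with
  | nil => rfl
  | cons a ω ih => simp only [endPt, add_right_comm p v, ih]

variable {ℓ : ℕ} {p : ℤ × ℤ} {a : ℕ} {ω : List ℕ}

theorem le_endPt_fst_add_snd (p : ℤ × ℤ) (ω : List ℕ) :
    p.1 + p.2 ≤ (endPt (svec ℓ) p ω).1 + (endPt (svec ℓ) p ω).2 := by
  induction ω generalizing p with
  | nil => rfl
  | cons a ω ih =>
    have hstep : 0 ≤ (svec ℓ a).1 + (svec ℓ a).2 := by
      unfold svec; split_ifs <;> simp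
    refine le_trans ?_ (ih (p + svec ℓ a))
    simp only [Prod.fst_add, Prod.snd_add]
    linarith

theorem isSchroder_nil : IsSchroder ℓ p [] ↔ 0 ≤ p.2 := by
  simp [IsSchroder, verts]

theorem IsSchroder.snd_nonneg (h : IsSchroder ℓ p ω) : 0 ≤ p.2 :=
  h.2 p (by cases ω <;> simp [verts])

theorem isSchroder_cons :
    IsSchroder ℓ p (a :: ω) ↔ a ≤ ℓ + 1 ∧ 0 ≤ p.2 ∧ IsSchroder ℓ (p + svec ℓ a) ω := by
  simp only [IsSchroder, verts, List.forall_mem_cons]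
  tauto

theorem isSmall_nil : IsSmall ℓ p [] ↔ 0 ≤ p.2 := by
  simp [IsSmall, isSchroder_nil, stepsOK]

theorem isSmall_cons :
    IsSmall ℓ p (a :: ω) ↔ a ≤ ℓ + 1 ∧ 0 ≤ p.2 ∧ (1 ≤ a → a ≤ ℓ → (a : ℤ) ≤ p.2) ∧
      IsSmall ℓ (p + svec ℓ a) ω := by
  simp only [IsSmall, isSchroder_cons, stepsOK]
  tauto

theorem isSmall_add_fst (d : ℤ) : IsSmall ℓ (p + (d, 0)) ω ↔ IsSmall ℓ p ω := by
  induction ω generalizing p with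
  | nil => simp [isSmall_nil]
  | cons a ω ih => simp [isSmall_cons, add_right_comm p (d, 0), ih]

theorem start_add_svec_of_le {s : ℤ} {r j : ℕ} (hj : j ≤ ℓ) :
    ((s * ℓ - r, (r : ℤ)) : ℤ × ℤ) + svec ℓ j =
      ((s + 1) * ℓ - ((r + ℓ - j : ℕ) : ℤ), ((r + ℓ - j : ℕ) : ℤ)) := by
  rw [svec, if_pos hj, Prod.mk_add_mk, Nat.cast_sub (by omega)]
  push_cast
  congr 1 <;> ring

theorem start_add_svec_down {s : ℤ} {r : ℕ} :
    ((s * ℓ - (r + 1 : ℕ), ((r + 1 : ℕ) : ℤ)) : ℤ × ℤ) + svec ℓ (ℓ + 1) = (s * ℓ - r, (r : ℤ)) := by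
  rw [svec, if_neg (by omega), Prod.mk_add_mk]
  push_cast
  congr 1 <;> ring

end Paths

section Sets

variable {ℓ : ℕ} {s t : ℤ} {r : ℕ}

theorem smallSet_subset_bigSet : SmallSet ℓ s t r ⊆ BigSet ℓ s t r :=
  fun _ h => ⟨h.1.1, h.2⟩

theorem nil_mem_bigSet_iff (hℓ : 1 ≤ ℓ) : [] ∈ BigSet ℓ s t r ↔ s = t ∧ r = 0 := by
  have hℓ' : (ℓ : ℤ) ≠ 0 := by omega
  simp only [BigSet, Set.mem_ofPred_eq, isSchroder_nil, endPt, Prod.mk.injEq]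
  constructor
  · rintro ⟨-, hx, hy⟩
    obtain rfl : r = 0 := by omega
    exact ⟨mul_right_cancel₀ hℓ' (by simpa using hx), rfl⟩
  · rintro ⟨rfl, rfl⟩
    simp

theorem bigSet_eq_empty_of_lt (hℓ : 1 ≤ ℓ) (h : t < s) : BigSet ℓ s t r = ∅ := by
  refine Set.eq_empty_of_forall_notMem fun ω hω => ?_
  have hmono := le_endPt_fst_add_snd (ℓ := ℓ) (s * ℓ - r, (r : ℤ)) ω
  rw [hω.2] at hmono
  have : t * (ℓ : ℤ) < s * ℓ := mul_lt_mul_of_pos_right h (by omega)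
  simp only [sub_add_cancel, add_zero] at hmono
  linarith

theorem head_mem_range_of_cons_mem_bigSet {a : ℕ} {ω : List ℕ} (h : a :: ω ∈ BigSet ℓ s t r) :
    a ∈ range (ℓ + 2) :=
  mem_range.2 (Nat.lt_succ_of_le (isSchroder_cons.1 h.1).1)

theorem preimage_cons_bigSet_of_le {j : ℕ} (hj : j ≤ ℓ) :
    List.cons j ⁻¹' BigSet ℓ s t r = BigSet ℓ (s + 1) t (r + ℓ - j) := by
  ext ω
  simp only [Set.mem_preimage, BigSet, Set.mem_ofPred_eq, isSchroder_cons, endPt,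
    start_add_svec_of_le hj]
  have : (0 : ℤ) ≤ r := by positivity
  tauto

theorem preimage_cons_bigSet_down :
    List.cons (ℓ + 1) ⁻¹' BigSet ℓ s t r = if r = 0 then ∅ else BigSet ℓ s t (r - 1) := by
  ext ω
  rcases r with _ | r
  · simp only [Set.mem_preimage, BigSet, Set.mem_ofPred_eq, if_pos, Set.mem_empty_iff_false,
      iff_false]
    intro h
    have := (isSchroder_cons.1 h.1).2.2.snd_nonneg
    simp [svec] at this
  · simp only [Set.mem_preimage, BigSet, Set.mem_ofPred_eq, isSchroder_cons, endPt,
      start_add_svec_down, Nat.add_one_ne_zero, if_false, Nat.add_sub_cancel]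
    have : (0 : ℤ) ≤ ↑(r + 1) := by positivity
    tauto

theorem preimage_cons_smallSet_of_le {j : ℕ} (hj : j ≤ ℓ) :
    List.cons j ⁻¹' SmallSet ℓ s t r = if j ≤ r then SmallSet ℓ (s + 1) t (r - j + ℓ) else ∅ := by
  ext ω
  have hr : (0 : ℤ) ≤ r := by positivity
  split_ifs with hjr
  · rw [show r - j + ℓ = r + ℓ - j by omega]
    simp only [Set.mem_preimage, SmallSet, Set.mem_ofPred_eq, isSmall_cons, endPt,
      start_add_svec_of_le hj]
    have : (j : ℤ) ≤ r := by exact_mod_cast hjr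
    tauto
  · simp only [Set.mem_preimage, SmallSet, Set.mem_ofPred_eq, isSmall_cons,
      Set.mem_empty_iff_false, iff_false]
    intro h
    have : (j : ℤ) ≤ r := h.1.2.2.1 (by omega) hj
    omega

theorem preimage_cons_smallSet_down :
    List.cons (ℓ + 1) ⁻¹' SmallSet ℓ s t r = if r = 0 then ∅ else SmallSet ℓ s t (r - 1) := by
  rcases r with _ | r
  · have h := Set.preimage_mono (f := List.cons (ℓ + 1))
      (smallSet_subset_bigSet (ℓ := ℓ) (s := s) (t := t) (r := 0))
    rwa [preimage_cons_bigSet_down, if_pos rfl, Set.subset_empty_iff] at h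
  · ext ω
    simp only [Set.mem_preimage, SmallSet, Set.mem_ofPred_eq, isSmall_cons, endPt,
      start_add_svec_down, Nat.add_one_ne_zero, if_false, Nat.add_sub_cancel]
    have : (0 : ℤ) ≤ ↑(r + 1) := by positivity
    have : ¬ ℓ + 1 ≤ ℓ := by omega
    tauto

theorem smallSet_add_one : SmallSet ℓ (s + 1) (t + 1) r = SmallSet ℓ s t r := by
  ext ω
  have hstart : (((s + 1) * ℓ - r, (r : ℤ)) : ℤ × ℤ) = (s * ℓ - r, (r : ℤ)) + ((ℓ : ℤ), 0) := by
    ext <;> simp; ring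
  have hend : (((t + 1) * ℓ, 0) : ℤ × ℤ) = ((t * ℓ, 0) : ℤ × ℤ) + ((ℓ : ℤ), 0) := by
    ext <;> simp; ring
  simp only [SmallSet, Set.mem_ofPred_eq, hstart, hend, isSmall_add_fst, endPt_add, add_left_inj]

theorem replicate_mem_smallSet_self (t : ℤ) (r : ℕ) :
    List.replicate r (ℓ + 1) ∈ SmallSet ℓ t t r := by
  induction r with
  | zero => simp [SmallSet, isSmall_nil, endPt]
  | succ r ih =>
    change List.replicate r (ℓ + 1) ∈ List.cons (ℓ + 1) ⁻¹' SmallSet ℓ t t (r + 1)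
    rwa [preimage_cons_smallSet_down, if_neg (Nat.add_one_ne_zero r), Nat.add_sub_cancel]

theorem eq_replicate_of_mem_bigSet_self (hℓ : 1 ≤ ℓ) {ω : List ℕ} (h : ω ∈ BigSet ℓ t t r) :
    ω = List.replicate r (ℓ + 1) := by
  induction ω generalizing r with
  | nil => rw [((nil_mem_bigSet_iff hℓ).1 h).2, List.replicate_zero]
  | cons a ω ih =>
    change ω ∈ List.cons a ⁻¹' BigSet ℓ t t r at h
    rcases Nat.lt_succ_iff_lt_or_eq.1 (mem_range.1 (head_mem_range_of_cons_mem_bigSet h))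
      with ha | rfl
    · rw [preimage_cons_bigSet_of_le (by omega), bigSet_eq_empty_of_lt hℓ (lt_add_one t)] at h
      exact absurd h (Set.notMem_empty ω)
    · rcases r with _ | r
      · simp [preimage_cons_bigSet_down] at h
      · rw [preimage_cons_bigSet_down, if_neg (Nat.add_one_ne_zero r), Nat.add_sub_cancel] at h
        rw [ih h, List.replicate_succ]

theorem ncard_bigSet_self (hℓ : 1 ≤ ℓ) (t : ℤ) (r : ℕ) : (BigSet ℓ t t r).ncard = 1 :=
  Set.ncard_eq_one.2 ⟨_, Set.eq_singleton_iff_unique_mem.2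
    ⟨smallSet_subset_bigSet (replicate_mem_smallSet_self t r),
      fun _ => eq_replicate_of_mem_bigSet_self hℓ⟩⟩

theorem ncard_smallSet_self (hℓ : 1 ≤ ℓ) (t : ℤ) (r : ℕ) : (SmallSet ℓ t t r).ncard = 1 :=
  Set.ncard_eq_one.2 ⟨_, Set.eq_singleton_iff_unique_mem.2
    ⟨replicate_mem_smallSet_self t r,
      fun _ h => eq_replicate_of_mem_bigSet_self hℓ (smallSet_subset_bigSet h)⟩⟩

end Sets

section Counting

variable {ℓ : ℕ} {s t : ℤ}

theorem nil_notMem_bigSet (hℓ : 1 ≤ ℓ) (hst : s ≠ t) (r : ℕ) : [] ∉ BigSet ℓ s t r :=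
  fun h => hst ((nil_mem_bigSet_iff hℓ).1 h).1

theorem finite_bigSet (hℓ : 1 ≤ ℓ) (s t : ℤ) (r : ℕ) : (BigSet ℓ s t r).Finite := by
  rcases lt_or_ge t s with hts | hst
  · simp [bigSet_eq_empty_of_lt hℓ hts]
  induction s, hst using Int.leInductionDown generalizing r with
  | base => exact Set.finite_of_ncard_ne_zero (by simp [ncard_bigSet_self hℓ])
  | pred s hst ih =>
    induction r using Nat.strong_induction_on with
    | _ r ihr =>
      refine List.finite_of_finite_preimage_cons (range (ℓ + 2)) (nil_notMem_bigSet hℓ (by omega) r)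
        (fun _ _ => head_mem_range_of_cons_mem_bigSet) fun a ha => ?_
      rcases Nat.lt_succ_iff_lt_or_eq.1 (mem_range.1 ha) with ha | rfl
      · rw [preimage_cons_bigSet_of_le (by omega), sub_add_cancel]
        exact ih _
      · rw [preimage_cons_bigSet_down]
        split_ifs with hr
        · exact Set.finite_empty
        · exact ihr _ (by omega)

theorem ncard_bigSet_of_lt (hℓ : 1 ≤ ℓ) (hst : s < t) (r : ℕ) :
    (BigSet ℓ s t r).ncard = (if r = 0 then 0 else (BigSet ℓ s t (r - 1)).ncard) +
      ∑ h ∈ Icc r (r + ℓ), (BigSet ℓ (s + 1) t h).ncard := by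
  rw [List.ncard_eq_sum_ncard_preimage_cons (range (ℓ + 2)) (nil_notMem_bigSet hℓ hst.ne r)
      (fun _ _ => head_mem_range_of_cons_mem_bigSet)
      (fun _ _ => (finite_bigSet hℓ s t r).preimage List.cons_injective.injOn),
    sum_range_succ, add_comm, preimage_cons_bigSet_down, apply_ite Set.ncard, Set.ncard_empty,
    ← sum_range_sub_eq_sum_Icc]
  congr 1
  exact sum_congr rfl fun j hj => by rw [preimage_cons_bigSet_of_le (by simp at hj; omega)]

theorem ncard_smallSet_of_lt (hℓ : 1 ≤ ℓ) (hst : s < t) (r : ℕ) :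
    (SmallSet ℓ s t r).ncard = (if r = 0 then 0 else (SmallSet ℓ s t (r - 1)).ncard) +
      ∑ h ∈ Icc (r - ℓ) r, (SmallSet ℓ (s + 1) t (h + ℓ)).ncard := by
  rw [List.ncard_eq_sum_ncard_preimage_cons (range (ℓ + 2))
      (fun h => nil_notMem_bigSet hℓ hst.ne r (smallSet_subset_bigSet h))
      (fun _ _ h => head_mem_range_of_cons_mem_bigSet (smallSet_subset_bigSet h))
      (fun _ _ => ((finite_bigSet hℓ s t r).subset smallSet_subset_bigSet).preimage
        List.cons_injective.injOn),
    sum_range_succ, add_comm, preimage_cons_smallSet_down, apply_ite Set.ncard, Set.ncard_empty,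
    ← sum_range_ite_le_eq_sum_Icc]
  congr 1
  refine sum_congr rfl fun j hj => ?_
  rw [preimage_cons_smallSet_of_le (by simp at hj; omega), apply_ite Set.ncard, Set.ncard_empty]

theorem sum_Icc_ncard_bigSet (hℓ : 1 ≤ ℓ) (hst : s ≤ t) {r : ℕ} (hr : ℓ ≤ r ∨ s < t) :
    ∑ h ∈ Icc (r - ℓ) r, (BigSet ℓ s t h).ncard = (ℓ + 1) * (SmallSet ℓ s t r).ncard := by
  induction s, hst using Int.leInductionDown generalizing r with
  | base =>
    have hr : ℓ ≤ r := hr.resolve_right (lt_irrefl t)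
    simp only [ncard_bigSet_self hℓ, ncard_smallSet_self hℓ, sum_const, Nat.card_Icc, smul_eq_mul,
      mul_one]
    omega
  | pred s hst ih =>
    have hup (h : ℕ) : ∑ k ∈ Icc h (h + ℓ), (BigSet ℓ s t k).ncard =
        (ℓ + 1) * (SmallSet ℓ s t (h + ℓ)).ncard := by
      simpa using ih (r := h + ℓ) (Or.inl (Nat.le_add_left ℓ h))
    have hlt : s - 1 < t := by omega
    induction r with
    | zero =>
      rw [Nat.zero_sub, Icc_self, sum_singleton, ncard_bigSet_of_lt hℓ hlt,
        ncard_smallSet_of_lt hℓ hlt, if_pos rfl, if_pos rfl, sub_add_cancel, Nat.zero_sub,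
        Icc_self, sum_singleton]
      simpa using hup 0
    | succ r ihr =>
      rw [sum_congr rfl fun h _ => ncard_bigSet_of_lt hℓ hlt h, sum_add_distrib,
        sum_Icc_ite_pred fun h => (BigSet ℓ (s - 1) t h).ncard,
        show r + 1 - ℓ - 1 = r - ℓ by omega, ihr (Or.inr hlt), ncard_smallSet_of_lt hℓ hlt (r + 1),
        if_neg (Nat.add_one_ne_zero r), Nat.add_sub_cancel, sub_add_cancel, mul_add, mul_sum]
      simp only [hup]

end Counting

theorem card_bigSet_eq_general (ℓ : ℕ) (hℓ : 1 ≤ ℓ)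
    (s t : ℤ) (hst : s ≤ t) (r : ℕ) :
    (BigSet ℓ s (t + 1) r).ncard =
      (ℓ + 1) * ∑ i ∈ Finset.range (r + 1), (SmallSet ℓ s t (i + ℓ)).ncard := by
  have hlt : s < t + 1 := by omega
  have hwindow (i : ℕ) : ∑ h ∈ Icc i (i + ℓ), (BigSet ℓ (s + 1) (t + 1) h).ncard =
      (ℓ + 1) * (SmallSet ℓ s t (i + ℓ)).ncard := by
    rw [← smallSet_add_one, ← sum_Icc_ncard_bigSet hℓ (by omega) (Or.inl (Nat.le_add_left ℓ i)),
      Nat.add_sub_cancel]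
  induction r with
  | zero => rw [ncard_bigSet_of_lt hℓ hlt, if_pos rfl, zero_add, hwindow, sum_range_one]
  | succ r ih =>
    rw [ncard_bigSet_of_lt hℓ hlt, if_neg (Nat.add_one_ne_zero r), Nat.add_sub_cancel, ih, hwindow,
      sum_range_succ _ (r + 1), mul_add]

/-- `|B^r_{s,t+1}| = (ℓ+1) ∑_{i=0}^{r} |S^{i+ℓ}_{s,t}|`. -/
theorem card_bigSet_eq (ℓ : ℕ) (hℓ : 1 ≤ ℓ)
    (s t : ℤ) (hst : s ≤ t) (r : ℕ) (hr : r < ℓ) :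
    (BigSet ℓ s (t + 1) r).ncard =
      (ℓ + 1) * ∑ i ∈ Finset.range (r + 1), (SmallSet ℓ s t (i + ℓ)).ncard :=
  card_bigSet_eq_general ℓ hℓ s t hst r
end
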